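/- Let f ∈ BV(0,1) with 0 ≤ f ≤ 1 satisfy the level-set regularity hypothesis (H), and let (u, c₁, c₂) be a minimizer of the one-dimensional Chan–Vese functional F with u binary and nonconstant. Then every jump point x₀ ∈ J_u satisfies (c₁+c₂)/2 ∈ [min(f⁻(x₀), f⁺(x₀)), max(f⁻(x₀), f⁺(x₀))]; in particular, if f is piecewise constant then J_u ⊆ J_f. -/

import Mathlib

/-!
Replacing a binary minimizer `u` on a short interval around a jump point `x₀` by one of its
one-sided limits does not increase `|Du|`. If `(c₁ + c₂)/2` lay strictly outside the interval
spanned by `f⁻(x₀)` and `f⁺(x₀)`, the same one of the two values `0, 1` would be strictly cheaper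
for the fidelity term on both sides of `x₀`, and filling the interval with it would lower `F`.
(That `c₁ ≠ c₂` is forced by the jump: for `c₁ = c₂` the fidelity ignores `u`, so `|Du| = 0`.)

If moreover `f` is locally constant off a finite set and continuous at `x₀`, then
`f ≡ (c₁ + c₂)/2` near `x₀`, where both values of `u` cost the same, so moving the jump slightly
to the right gives a second minimizer `u'` with the same constants. Minimality in `c₁` means
`∫ u (c₁ - f) = 0` for every minimizer (`c₁` is the mean of `f` on `{u = 1}`), but this integral
changes by a nonzero multiple of `c₁ - (c₁ + c₂)/2` when passing from `u` to `u'`.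
-/

open scoped ENNReal NNReal
open MeasureTheory Set Filter Topology

/-- The one-dimensional Chan--Vese type functional
`F(u,c₁,c₂) = |Du|((0,1)) + ∫ 𝕀_{[0,1]}(u) + λ∫ u(c₁-f)² + (1-u)(c₂-f)²`. -/
noncomputable def Fcv (lam : ℝ) (f : ℝ → ℝ) (u : ℝ → ℝ) (c₁ c₂ : ℝ) : ℝ≥0∞ :=
  eVariationOn u (Ioo 0 1)
    + (∫⁻ x in Ioo (0:ℝ) 1, (if u x ∈ Icc (0:ℝ) 1 then 0 else ⊤))
    + ENNReal.ofReal lam * ∫⁻ x in Ioo (0:ℝ) 1,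
        ENNReal.ofReal (u x * (c₁ - f x) ^ 2 + (1 - u x) * (c₂ - f x) ^ 2)

section Variation

variable {E : Type*} [PseudoEMetricSpace E] {u : ℝ → E} {l r x₀ : ℝ} {ul ur : E}

theorem edist_add_edist_add_edist_le_eVariationOn_Icc (hl : l < x₀) (hr : x₀ < r)
    (hul : Tendsto u (𝓝[<] x₀) (𝓝 ul)) (hur : Tendsto u (𝓝[>] x₀) (𝓝 ur)) :
    edist (u l) ul + edist ul ur + edist ur (u r) ≤ eVariationOn u (Icc l r) := by
  have hfour : ∀ s ∈ Ioo l x₀, ∀ t ∈ Ioo x₀ r,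
      edist (u l) (u s) + edist (u s) (u t) + edist (u t) (u r) ≤ eVariationOn u (Icc l r) := by
    intro s hs t ht
    have hst : s ≤ t := (hs.2.trans ht.1).le
    rw [← univ_inter (Icc l r),
      ← eVariationOn.Icc_add_Icc u (hs.1.le.trans hst) ht.2.le (mem_univ t),
      ← eVariationOn.Icc_add_Icc u hs.1.le hst (mem_univ s)]
    simp only [univ_inter]
    gcongr <;> exact eVariationOn.edist_le u
      (by simp [*, hs.1.le, ht.2.le]) (by simp [*, hs.1.le, ht.2.le])
  have hleft : ∀ t ∈ Ioo x₀ r,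
      edist (u l) ul + edist ul (u t) + edist (u t) (u r) ≤ eVariationOn u (Icc l r) := fun t ht =>
    le_of_tendsto (((tendsto_const_nhds.edist hul).add (hul.edist tendsto_const_nhds)).add
      tendsto_const_nhds) (eventually_of_mem (Ioo_mem_nhdsLT hl) fun s hs => hfour s hs t ht)
  exact le_of_tendsto ((tendsto_const_nhds.add (tendsto_const_nhds.edist hur)).add
    (hur.edist tendsto_const_nhds)) (eventually_of_mem (Ioo_mem_nhdsGT hr) hleft)

theorem eVariationOn_piecewise_le {a b : ℝ} {v : E} (hal : a < l) (hl : l < x₀) (hr : x₀ < r)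
    (hrb : r < b) (hul : Tendsto u (𝓝[<] x₀) (𝓝 ul)) (hur : Tendsto u (𝓝[>] x₀) (𝓝 ur))
    (hv : v = ul ∨ v = ur) :
    eVariationOn ((Ioo l r).piecewise (fun _ => v) u) (Ioo a b) ≤ eVariationOn u (Ioo a b) := by
  set u' := (Ioo l r).piecewise (fun _ => v) u
  have hlr : l ≤ r := (hl.trans hr).le
  have hsplit : ∀ g : ℝ → E, eVariationOn g (Ioo a b) =
      eVariationOn g (Ioc a l) + eVariationOn g (Icc l r) + eVariationOn g (Ico r b) := by
    intro g
    rw [← eVariationOn.union g (isGreatest_Ioc hal) (isLeast_Icc hlr), Ioc_union_Icc_eq_Ioc hal hlr,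
      ← eVariationOn.union g (isGreatest_Ioc (hal.trans_le hlr)) (isLeast_Ico hrb),
      Ioc_union_Ico_eq_Ioo (hal.trans_le hlr) hrb]
  have hout : EqOn u' u (Ioc a l ∪ Ico r b) := by
    rintro x (hx | hx)
    · exact piecewise_eq_of_notMem _ _ _ fun h => h.1.not_ge hx.2
    · exact piecewise_eq_of_notMem _ _ _ fun h => h.2.not_ge hx.1
  -- on `Icc l r`, `u'` factors through a monotone map onto `{l, x₀, r}`
  set φ : ℝ → ℝ := fun x => if x = l then l else if x = r then r else x₀
  have hφ_mono : MonotoneOn φ (Icc l r) := by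
    intro x hx y hy hxy
    simp only [φ]
    split_ifs <;> grind
  have hφ_maps : MapsTo φ (Icc l r) ({l, x₀} ∪ {x₀, r}) := by
    intro x _
    simp only [φ]
    split_ifs <;> simp
  have hφ_eq : EqOn (u' ∘ φ) u' (Icc l r) := by
    intro x hx
    by_cases h1 : x = l
    · simp [φ, h1]
    by_cases h2 : x = r
    · simp [φ, h2, (hl.trans hr).ne']
    simp only [Function.comp, φ, if_neg h1, if_neg h2, u']
    rw [piecewise_eq_of_mem (Ioo l r) _ _ ⟨hl, hr⟩,
      piecewise_eq_of_mem (Ioo l r) _ _ ⟨lt_of_le_of_ne hx.1 (Ne.symm h1), lt_of_le_of_ne hx.2 h2⟩]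
  have hmid : eVariationOn u' (Icc l r) ≤ edist (u l) v + edist v (u r) := by
    have hul' : u' l = u l := piecewise_eq_of_notMem _ _ _ fun h => h.1.false
    have hur' : u' r = u r := piecewise_eq_of_notMem _ _ _ fun h => h.2.false
    have hux : u' x₀ = v := piecewise_eq_of_mem _ _ _ ⟨hl, hr⟩
    calc eVariationOn u' (Icc l r) = eVariationOn (u' ∘ φ) (Icc l r) :=
          (eVariationOn.eq_of_eqOn hφ_eq).symm
      _ ≤ eVariationOn u' ({l, x₀} ∪ {x₀, r}) :=
          eVariationOn.comp_le_of_monotoneOn _ _ hφ_mono hφ_maps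
      _ = edist (u l) v + edist v (u r) := by
        rw [eVariationOn.union u' (x := x₀) ⟨by simp, by simp [hl.le]⟩ ⟨by simp, by simp [hr.le]⟩,
          eVariationOn.pair, eVariationOn.pair, hul', hur', hux]
  have hjump : edist (u l) v + edist v (u r) ≤ edist (u l) ul + edist ul ur + edist ur (u r) := by
    rcases hv with rfl | rfl
    · calc _ ≤ edist (u l) v + (edist v ur + edist ur (u r)) := by
            gcongr; exact edist_triangle _ _ _
        _ = _ := by ring
    · calc _ ≤ edist (u l) ul + edist ul v + edist v (u r) := by
            gcongr; exact edist_triangle _ _ _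
        _ = _ := by ring
  rw [hsplit, hsplit, eVariationOn.eq_of_eqOn (hout.mono subset_union_left),
    eVariationOn.eq_of_eqOn (hout.mono subset_union_right)]
  gcongr
  exact hmid.trans (hjump.trans (edist_add_edist_add_edist_le_eVariationOn_Icc hl hr hul hur))

end Variation

theorem LocallyBoundedVariationOn.aemeasurable_restrict {f : ℝ → ℝ} {s : Set ℝ}
    (hf : LocallyBoundedVariationOn f s) (hs : MeasurableSet s) {ν : Measure ℝ} :
    AEMeasurable f (ν.restrict s) := by
  obtain ⟨p, q, hp, hq, rfl⟩ := hf.exists_monotoneOn_sub_monotoneOn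
  exact (aemeasurable_restrict_of_monotoneOn hs hp).sub (aemeasurable_restrict_of_monotoneOn hs hq)

theorem lintegral_ofReal_add_mul_le {α : Type*} [MeasurableSpace α] {ν : Measure α}
    {g h : α → ℝ} {s : Set α} (hs : MeasurableSet s) {γ : ℝ} (hγ : 0 ≤ γ)
    (hg : ∀ᵐ x ∂ν, 0 ≤ g x) (hgh : ∀ᵐ x ∂ν, g x + s.indicator (fun _ => γ) x ≤ h x) :
    ∫⁻ x, ENNReal.ofReal (g x) ∂ν + ENNReal.ofReal γ * ν s ≤ ∫⁻ x, ENNReal.ofReal (h x) ∂ν := by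
  rw [← lintegral_indicator_const hs, ← lintegral_add_right _ (measurable_const.indicator hs)]
  refine lintegral_mono_ae ?_
  filter_upwards [hg, hgh] with x hgx hghx
  by_cases hx : x ∈ s
  · simp only [indicator_of_mem hx] at hghx ⊢
    rw [← ENNReal.ofReal_add hgx hγ]
    exact ENNReal.ofReal_le_ofReal hghx
  · simp only [indicator_of_notMem hx, add_zero] at hghx ⊢
    exact ENNReal.ofReal_le_ofReal hghx

theorem integrable_comp_of_continuous {α : Type*} [MeasurableSpace α] {ν : Measure α}
    [IsFiniteMeasure ν] {g : ℝ → ℝ → ℝ} (hg : Continuous (Function.uncurry g)) {u f : α → ℝ}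
    (hu : AEMeasurable u ν) (hf : AEMeasurable f ν) (hu01 : ∀ᵐ x ∂ν, u x ∈ Icc 0 1)
    (hf01 : ∀ᵐ x ∂ν, f x ∈ Icc 0 1) : Integrable (fun x => g (u x) (f x)) ν := by
  obtain ⟨C, hC⟩ := (isCompact_Icc.prod isCompact_Icc).exists_bound_of_continuousOn hg.continuousOn
  refine Integrable.of_bound
    (hg.measurable.comp_aemeasurable (hu.prodMk hf)).aestronglyMeasurable C ?_
  filter_upwards [hu01, hf01] with x h1 h2 using hC (u x, f x) ⟨h1, h2⟩

local notation "μ" => volume.restrict (Ioo (0:ℝ) 1)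

section Localization

variable {u : ℝ → ℝ} {x₀ L : ℝ}

theorem mem_Icc_of_binary {a : ℝ} (ha : a = 0 ∨ a = 1) : a ∈ Icc (0:ℝ) 1 := by
  rcases ha with rfl | rfl <;> simp

theorem one_sub_binary {a : ℝ} (ha : a = 0 ∨ a = 1) : 1 - a = 0 ∨ 1 - a = 1 := by
  rcases ha with rfl | rfl <;> simp

theorem eq_or_eq_of_binary {a b v : ℝ} (ha : a = 0 ∨ a = 1) (hb : b = 0 ∨ b = 1)
    (hv : v = 0 ∨ v = 1) (hab : a ≠ b) : v = a ∨ v = b := by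
  rcases ha with rfl | rfl <;> rcases hb with rfl | rfl <;> rcases hv with rfl | rfl <;> simp_all

theorem restrict_Ioo_ne_zero {a b : ℝ} (hab : a < b) (ha : a < 1) (hb : 0 < b) :
    μ (Ioo a b) ≠ 0 := by
  rw [Measure.restrict_apply measurableSet_Ioo, Ioo_inter_Ioo]
  exact (isOpen_Ioo.measure_pos volume (nonempty_Ioo.2 (by simp [*]))).ne'

theorem nhdsLT_inf_ae_neBot (hx₀ : x₀ ∈ Ioo (0:ℝ) 1) : (𝓝[<] x₀ ⊓ ae μ).NeBot := by
  refine inf_neBot_iff_frequently_left.2 fun hp => ?_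
  obtain ⟨l, hl, hsub⟩ := (nhdsLT_basis x₀).eventually_iff.1 hp
  exact frequently_ae_iff.2 fun h => restrict_Ioo_ne_zero hl (hl.trans hx₀.2) hx₀.1
    (measure_mono_null hsub h)

theorem nhdsGT_inf_ae_neBot (hx₀ : x₀ ∈ Ioo (0:ℝ) 1) : (𝓝[>] x₀ ⊓ ae μ).NeBot := by
  refine inf_neBot_iff_frequently_left.2 fun hp => ?_
  obtain ⟨r, hr, hsub⟩ := (nhdsGT_basis x₀).eventually_iff.1 hp
  exact frequently_ae_iff.2 fun h => restrict_Ioo_ne_zero hr hx₀.2 (hx₀.1.trans hr)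
    (measure_mono_null hsub h)

theorem eventually_forall_Ioo_nhdsLT {p : ℝ → Prop} (h : ∀ᶠ x in 𝓝[<] x₀, p x) :
    ∀ᶠ l in 𝓝[<] x₀, ∀ x ∈ Ioo l x₀, p x := by
  obtain ⟨l₀, hl₀, hsub⟩ := (nhdsLT_basis x₀).eventually_iff.1 h
  filter_upwards [Ioo_mem_nhdsLT hl₀] with l hl x hx using hsub ⟨hl.1.trans hx.1, hx.2⟩

theorem eventually_forall_Ioo_nhdsGT {p : ℝ → Prop} (h : ∀ᶠ x in 𝓝[>] x₀, p x) :
    ∀ᶠ r in 𝓝[>] x₀, ∀ x ∈ Ioo x₀ r, p x := by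
  obtain ⟨r₀, hr₀, hsub⟩ := (nhdsGT_basis x₀).eventually_iff.1 h
  filter_upwards [Ioo_mem_nhdsGT hr₀] with r hr x hx using hsub ⟨hx.1, hx.2.trans hr.2⟩

theorem eq_of_binary_of_dist_lt {a b : ℝ} (ha : a = 0 ∨ a = 1) (hb : b = 0 ∨ b = 1)
    (h : dist a b < 1) : a = b := by
  rcases ha with rfl | rfl <;> rcases hb with rfl | rfl <;>
    first | rfl | norm_num [Real.dist_eq] at h

theorem binary_of_tendsto {F : Filter ℝ} [(F ⊓ ae μ).NeBot]
    (hbin : ∀ᵐ x ∂μ, u x = 0 ∨ u x = 1) (h : Tendsto u F (𝓝 L)) :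
    L = 0 ∨ L = 1 :=
  (toFinite {(0:ℝ), 1}).isClosed.mem_of_tendsto (h.mono_left inf_le_left)
    (mem_inf_of_right hbin)

theorem eventually_ae_eq_nhdsLT (hbin : ∀ᵐ x ∂μ, u x = 0 ∨ u x = 1) (hL : L = 0 ∨ L = 1)
    (h : Tendsto u (𝓝[<] x₀) (𝓝 L)) :
    ∀ᶠ l in 𝓝[<] x₀, ∀ᵐ x ∂μ, x ∈ Ioo l x₀ → u x = L := by
  filter_upwards [eventually_forall_Ioo_nhdsLT (h (Metric.ball_mem_nhds L one_pos))] with l hl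
  filter_upwards [hbin] with x hx hxl using eq_of_binary_of_dist_lt hx hL (hl x hxl)

theorem eventually_ae_eq_nhdsGT (hbin : ∀ᵐ x ∂μ, u x = 0 ∨ u x = 1) (hL : L = 0 ∨ L = 1)
    (h : Tendsto u (𝓝[>] x₀) (𝓝 L)) :
    ∀ᶠ r in 𝓝[>] x₀, ∀ᵐ x ∂μ, x ∈ Ioo x₀ r → u x = L := by
  filter_upwards [eventually_forall_Ioo_nhdsGT (h (Metric.ball_mem_nhds L one_pos))] with r hr
  filter_upwards [hbin] with x hx hxr using eq_of_binary_of_dist_lt hx hL (hr x hxr)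

end Localization

section Fidelity

def cvCost (c₁ c₂ w y : ℝ) : ℝ := w * (c₁ - y) ^ 2 + (1 - w) * (c₂ - y) ^ 2

noncomputable def fidelity (f : ℝ → ℝ) (c₁ c₂ : ℝ) (u : ℝ → ℝ) : ℝ≥0∞ :=
  ∫⁻ x in Ioo (0:ℝ) 1, ENNReal.ofReal (cvCost c₁ c₂ (u x) (f x))

variable {lam c₁ c₂ w y : ℝ} {f u : ℝ → ℝ}

theorem cvCost_nonneg (hw : w ∈ Icc (0:ℝ) 1) : 0 ≤ cvCost c₁ c₂ w y := by
  obtain ⟨hw₀, hw₁⟩ := hw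
  unfold cvCost; nlinarith [sq_nonneg (c₁ - y), sq_nonneg (c₂ - y)]

theorem cvCost_le_one (hc₁ : c₁ ∈ Icc (0:ℝ) 1) (hc₂ : c₂ ∈ Icc (0:ℝ) 1) (hw : w ∈ Icc (0:ℝ) 1)
    (hy : y ∈ Icc (0:ℝ) 1) : cvCost c₁ c₂ w y ≤ 1 := by
  obtain ⟨_, _⟩ := hc₁; obtain ⟨_, _⟩ := hc₂; obtain ⟨_, _⟩ := hw; obtain ⟨_, _⟩ := hy
  have h₁ : (c₁ - y) ^ 2 ≤ 1 := by nlinarith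
  have h₂ : (c₂ - y) ^ 2 ≤ 1 := by nlinarith
  unfold cvCost; nlinarith

theorem cvCost_self : cvCost c₁ c₁ w y = (c₁ - y) ^ 2 := by unfold cvCost; ring

theorem cvCost_midpoint : cvCost c₁ c₂ w ((c₁ + c₂) / 2) = ((c₁ - c₂) / 2) ^ 2 := by
  unfold cvCost; ring

theorem Fcv_eq_of_ae_mem_Icc (hu : ∀ᵐ x ∂μ, u x ∈ Icc (0:ℝ) 1) :
    Fcv lam f u c₁ c₂ = eVariationOn u (Ioo 0 1) + ENNReal.ofReal lam * fidelity f c₁ c₂ u := by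
  rw [Fcv, lintegral_congr_ae (hu.mono fun x hx => if_pos hx), lintegral_zero, add_zero]
  rfl

theorem Fcv_const_zero :
    Fcv lam f (fun _ => 0) c₁ c₂ = ENNReal.ofReal lam * fidelity f c₁ c₂ (fun _ => 0) := by
  rw [Fcv_eq_of_ae_mem_Icc (ae_of_all _ fun _ => left_mem_Icc.2 zero_le_one),
    eVariationOn.constant_on (by rintro _ ⟨_, _, rfl⟩ _ ⟨_, _, rfl⟩; rfl), zero_add]

theorem fidelity_ne_top (hf01 : ∀ x ∈ Ioo (0:ℝ) 1, f x ∈ Icc (0:ℝ) 1)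
    (hc₁ : c₁ ∈ Icc (0:ℝ) 1) (hc₂ : c₂ ∈ Icc (0:ℝ) 1) (hu : ∀ᵐ x ∂μ, u x ∈ Icc (0:ℝ) 1) :
    fidelity f c₁ c₂ u ≠ ⊤ := by
  refine ne_top_of_le_ne_top (b := ∫⁻ _ in Ioo (0:ℝ) 1, 1) (by simp) (lintegral_mono_ae ?_)
  filter_upwards [hu, ae_restrict_mem measurableSet_Ioo] with x hux hx
  exact ENNReal.ofReal_le_one.2 (cvCost_le_one hc₁ hc₂ hux (hf01 x hx))

theorem fidelity_eq_ofReal_integral (hf : AEMeasurable f μ)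
    (hf01 : ∀ x ∈ Ioo (0:ℝ) 1, f x ∈ Icc (0:ℝ) 1) (hu : AEMeasurable u μ)
    (hu01 : ∀ᵐ x ∂μ, u x ∈ Icc (0:ℝ) 1) :
    fidelity f c₁ c₂ u = ENNReal.ofReal (∫ x, cvCost c₁ c₂ (u x) (f x) ∂μ) :=
  (ofReal_integral_eq_lintegral_ofReal
    (integrable_comp_of_continuous (by unfold cvCost; fun_prop) hu hf hu01
      (ae_restrict_of_forall_mem measurableSet_Ioo hf01))
    (hu01.mono fun _ hx => cvCost_nonneg hx)).symm

theorem mul_eq_of_isMinOn_Icc {A B c₁ : ℝ} (hB : 0 ≤ B) (hBA : B ≤ A)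
    (hmin : IsMinOn (fun c => A * c ^ 2 - 2 * B * c) (Icc 0 1) c₁) : c₁ * A = B := by
  obtain ⟨c, hc, hcA⟩ : ∃ c ∈ Icc (0:ℝ) 1, c * A = B := by
    rcases (hB.trans hBA).eq_or_lt with hA | hA
    · exact ⟨0, ⟨le_rfl, zero_le_one⟩, by linarith⟩
    · exact ⟨B / A, ⟨div_nonneg hB hA.le, (div_le_one hA).2 hBA⟩, div_mul_cancel₀ B hA.ne'⟩
  -- for `c * A = B` the quadratic exceeds its value at `c` by `A (c₁ - c)²` at `c₁`
  have h := hmin hc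
  have hsq : (c₁ - c) ^ 2 * A = 0 := by
    refine le_antisymm ?_ (mul_nonneg (sq_nonneg _) (hB.trans hBA))
    subst hcA
    simp only [mem_ofPred_eq] at h
    nlinarith
  rcases mul_eq_zero.1 hsq with h0 | h0
  · rw [← hcA, sub_eq_zero.1 (pow_eq_zero_iff two_ne_zero |>.1 h0)]
  · rw [← hcA, h0, mul_zero, mul_zero]

theorem ae_piecewise_mem_Icc {l r v : ℝ} (hv : v ∈ Icc (0:ℝ) 1)
    (hu : ∀ᵐ x ∂μ, u x ∈ Icc (0:ℝ) 1) :
    ∀ᵐ x ∂μ, (Ioo l r).piecewise (fun _ => v) u x ∈ Icc (0:ℝ) 1 :=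
  hu.mono fun x hx => by by_cases h : x ∈ Ioo l r <;> simp [h, hx, hv]

theorem fidelity_piecewise_add_le {l r p q v γ : ℝ} (hγ : 0 ≤ γ) (hv : v = 0 ∨ v = 1)
    (hbin : ∀ᵐ x ∂μ, u x = 0 ∨ u x = 1) (hpq : Ioo p q ⊆ Ioo l r)
    (hgap : ∀ᵐ x ∂μ, x ∈ Ioo l r → cvCost c₁ c₂ v (f x) + γ ≤ cvCost c₁ c₂ (1 - v) (f x))
    (hside : ∀ᵐ x ∂μ, x ∈ Ioo p q → u x = 1 - v) :
    fidelity f c₁ c₂ ((Ioo l r).piecewise (fun _ => v) u) + ENNReal.ofReal γ * μ (Ioo p q) ≤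
      fidelity f c₁ c₂ u := by
  refine lintegral_ofReal_add_mul_le measurableSet_Ioo hγ
    ((ae_piecewise_mem_Icc (mem_Icc_of_binary hv) (hbin.mono fun _ => mem_Icc_of_binary)).mono
      fun _ hx => cvCost_nonneg hx) ?_
  filter_upwards [hbin, hgap, hside] with x hx hgapx hsidex
  by_cases hxpq : x ∈ Ioo p q
  · rw [piecewise_eq_of_mem _ _ _ (hpq hxpq), indicator_of_mem hxpq, hsidex hxpq]
    exact hgapx (hpq hxpq)
  rw [indicator_of_notMem hxpq, add_zero]
  by_cases hxlr : x ∈ Ioo l r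
  · rw [piecewise_eq_of_mem _ _ _ hxlr]
    rcases eq_or_eq_of_binary (b := 1 - v) hv (one_sub_binary hv) hx
      (by rcases hv with rfl | rfl <;> norm_num) with h | h
    · rw [h]
    · rw [h]; linarith [hgapx hxlr]
  · rw [piecewise_eq_of_notMem _ _ _ hxlr]

theorem integral_piecewise_sub_mul {l r x₀ ul ur c m : ℝ} (hlx : l < x₀) (hx₀ : 0 < x₀)
    (hxr : x₀ < r) (hr : r ≤ 1) (hfm : ∀ x ∈ Ioo l r, f x = m)
    (hlu : ∀ᵐ x ∂μ, x ∈ Ioo l x₀ → u x = ul) (hru : ∀ᵐ x ∂μ, x ∈ Ioo x₀ r → u x = ur) :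
    ∫ x, ((Ioo l r).piecewise (fun _ => ul) u x - u x) * (c - f x) ∂μ =
      (r - x₀) * ((ul - ur) * (c - m)) := by
  have hdiff : (fun x => ((Ioo l r).piecewise (fun _ => ul) u x - u x) * (c - f x)) =ᵐ[μ]
      (Ioo x₀ r).indicator (fun _ => (ul - ur) * (c - m)) := by
    filter_upwards [hlu, hru, Measure.ae_ne μ x₀] with x hxl hxr hx
    by_cases hxlr : x ∈ Ioo l r
    · rw [piecewise_eq_of_mem _ _ _ hxlr, hfm x hxlr]
      rcases lt_or_gt_of_ne hx with h | h
      · rw [hxl ⟨hxlr.1, h⟩, sub_self, zero_mul, indicator_of_notMem fun h' => h'.1.not_gt h]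
      · rw [hxr ⟨h, hxlr.2⟩, indicator_of_mem (show x ∈ Ioo x₀ r from ⟨h, hxlr.2⟩)]
    · rw [piecewise_eq_of_notMem _ _ _ hxlr, sub_self, zero_mul,
        indicator_of_notMem fun h' => hxlr ⟨hlx.trans h'.1, h'.2⟩]
  rw [integral_congr_ae hdiff, integral_indicator_const _ measurableSet_Ioo,
    measureReal_restrict_apply measurableSet_Ioo, inter_eq_left.2 (Ioo_subset_Ioo hx₀.le hr),
    Real.volume_real_Ioo_of_le hxr.le, smul_eq_mul]

end Fidelity

def IsCVMinimizer (lam : ℝ) (f u : ℝ → ℝ) (c₁ c₂ : ℝ) : Prop :=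
  ∀ (u' : ℝ → ℝ) (d₁ d₂ : ℝ), MemLp u' 2 μ →
    d₁ ∈ Icc (0:ℝ) 1 → d₂ ∈ Icc (0:ℝ) 1 → Fcv lam f u c₁ c₂ ≤ Fcv lam f u' d₁ d₂

namespace IsCVMinimizer

variable {lam c₁ c₂ x₀ ul ur : ℝ} {f u : ℝ → ℝ}

theorem of_Fcv_le (hmin : IsCVMinimizer lam f u c₁ c₂) {u' : ℝ → ℝ}
    (h : Fcv lam f u' c₁ c₂ ≤ Fcv lam f u c₁ c₂) : IsCVMinimizer lam f u' c₁ c₂ :=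
  fun w d₁ d₂ hw hd₁ hd₂ => h.trans (hmin w d₁ d₂ hw hd₁ hd₂)

theorem eVariationOn_ne_top (hmin : IsCVMinimizer lam f u c₁ c₂)
    (hf01 : ∀ x ∈ Ioo (0:ℝ) 1, f x ∈ Icc (0:ℝ) 1) (hc₁ : c₁ ∈ Icc (0:ℝ) 1)
    (hc₂ : c₂ ∈ Icc (0:ℝ) 1) (hu01 : ∀ᵐ x ∂μ, u x ∈ Icc (0:ℝ) 1) :
    eVariationOn u (Ioo 0 1) ≠ ⊤ := by
  have h := hmin _ c₁ c₂ (memLp_const 0) hc₁ hc₂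
  rw [Fcv_eq_of_ae_mem_Icc hu01, Fcv_const_zero] at h
  exact ne_top_of_le_ne_top (ENNReal.mul_ne_top ENNReal.ofReal_ne_top
    (fidelity_ne_top hf01 hc₁ hc₂ (ae_of_all _ fun _ => left_mem_Icc.2 zero_le_one)))
    (le_self_add.trans h)

theorem fidelity_le (hmin : IsCVMinimizer lam f u c₁ c₂) (hlam : 0 < lam)
    (hf01 : ∀ x ∈ Ioo (0:ℝ) 1, f x ∈ Icc (0:ℝ) 1) (hc₁ : c₁ ∈ Icc (0:ℝ) 1)
    (hc₂ : c₂ ∈ Icc (0:ℝ) 1) (hu01 : ∀ᵐ x ∂μ, u x ∈ Icc (0:ℝ) 1) {u' : ℝ → ℝ} {d₁ d₂ : ℝ}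
    (hu' : MemLp u' 2 μ) (hu'01 : ∀ᵐ x ∂μ, u' x ∈ Icc (0:ℝ) 1) (hd₁ : d₁ ∈ Icc (0:ℝ) 1)
    (hd₂ : d₂ ∈ Icc (0:ℝ) 1) (hvar : eVariationOn u' (Ioo 0 1) ≤ eVariationOn u (Ioo 0 1)) :
    fidelity f c₁ c₂ u ≤ fidelity f d₁ d₂ u' := by
  have h := hmin u' d₁ d₂ hu' hd₁ hd₂
  rw [Fcv_eq_of_ae_mem_Icc hu01, Fcv_eq_of_ae_mem_Icc hu'01] at h
  have h' := h.trans (add_le_add_left hvar _)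
  rwa [ENNReal.add_le_add_iff_left (hmin.eVariationOn_ne_top hf01 hc₁ hc₂ hu01),
    ENNReal.mul_le_mul_iff_right (by simpa using hlam) ENNReal.ofReal_ne_top] at h'

theorem ne_of_jump (hmin : IsCVMinimizer lam f u c₁ c₂)
    (hf01 : ∀ x ∈ Ioo (0:ℝ) 1, f x ∈ Icc (0:ℝ) 1) (hc₁ : c₁ ∈ Icc (0:ℝ) 1)
    (hu01 : ∀ᵐ x ∂μ, u x ∈ Icc (0:ℝ) 1) (hx₀ : x₀ ∈ Ioo (0:ℝ) 1)
    (hul : Tendsto u (𝓝[<] x₀) (𝓝 ul)) (hur : Tendsto u (𝓝[>] x₀) (𝓝 ur)) (hjump : ul ≠ ur) :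
    c₁ ≠ c₂ := by
  rintro rfl
  have h := hmin _ c₁ c₁ (memLp_const 0) hc₁ hc₁
  have hfid : fidelity f c₁ c₁ u = fidelity f c₁ c₁ (fun _ => 0) := by
    simp only [fidelity, cvCost_self]
  rw [Fcv_eq_of_ae_mem_Icc hu01, Fcv_const_zero, hfid] at h
  have hvar : eVariationOn u (Ioo 0 1) ≤ 0 :=
    ENNReal.le_of_add_le_add_right (ENNReal.mul_ne_top ENNReal.ofReal_ne_top
      (fidelity_ne_top hf01 hc₁ hc₁ (ae_of_all _ fun _ => left_mem_Icc.2 zero_le_one)))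
      (by rwa [zero_add])
  have hl : x₀ / 2 < x₀ := by linarith [hx₀.1]
  have hr : x₀ < (x₀ + 1) / 2 := by linarith [hx₀.2]
  have hsub : Icc (x₀ / 2) ((x₀ + 1) / 2) ⊆ Ioo 0 1 := fun x hx =>
    ⟨by linarith [hx.1, hx₀.1], by linarith [hx.2, hx₀.2]⟩
  have hjump' := (le_add_self.trans le_self_add).trans
    ((edist_add_edist_add_edist_le_eVariationOn_Icc hl hr hul hur).trans
      (eVariationOn.mono u hsub))
  exact hjump (edist_eq_zero.1 (le_antisymm (hjump'.trans hvar) zero_le))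

theorem integral_mul_sub_eq_zero (hmin : IsCVMinimizer lam f u c₁ c₂) (hlam : 0 < lam)
    (hf : AEMeasurable f μ) (hf01 : ∀ x ∈ Ioo (0:ℝ) 1, f x ∈ Icc (0:ℝ) 1)
    (hc₁ : c₁ ∈ Icc (0:ℝ) 1) (hc₂ : c₂ ∈ Icc (0:ℝ) 1) (hu : MemLp u 2 μ)
    (hu01 : ∀ᵐ x ∂μ, u x ∈ Icc (0:ℝ) 1) :
    ∫ x, u x * (c₁ - f x) ∂μ = 0 := by
  have hf01' : ∀ᵐ x ∂μ, f x ∈ Icc (0:ℝ) 1 := ae_restrict_of_forall_mem measurableSet_Ioo hf01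
  have hint : ∀ g : ℝ → ℝ → ℝ, Continuous (Function.uncurry g) →
      Integrable (fun x => g (u x) (f x)) μ := fun g hg =>
    integrable_comp_of_continuous hg hu.aemeasurable hf hu01 hf01'
  set A := ∫ x, u x ∂μ
  set B := ∫ x, u x * f x ∂μ
  have hquad : ∀ c, ∫ x, cvCost c c₂ (u x) (f x) ∂μ =
      ∫ x, cvCost 0 c₂ (u x) (f x) ∂μ + (A * c ^ 2 - 2 * B * c) := by
    intro c
    have hpt : ∀ x, cvCost c c₂ (u x) (f x) =
        cvCost 0 c₂ (u x) (f x) + (c ^ 2 * u x - 2 * c * (u x * f x)) := by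
      intro x; unfold cvCost; ring
    simp_rw [hpt]
    rw [integral_add (hint (cvCost 0 c₂) (by unfold cvCost; fun_prop))
      (hint (fun w y => c ^ 2 * w - 2 * c * (w * y)) (by fun_prop)),
      integral_sub (hint (fun w _ => c ^ 2 * w) (by fun_prop))
        (hint (fun w y => 2 * c * (w * y)) (by fun_prop)),
      integral_const_mul, integral_const_mul]
    ring
  have hisMin : IsMinOn (fun c => A * c ^ 2 - 2 * B * c) (Icc 0 1) c₁ := by
    intro c hc
    have h := hmin.fidelity_le hlam hf01 hc₁ hc₂ hu01 hu hu01 hc hc₂ le_rfl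
    rw [fidelity_eq_ofReal_integral hf hf01 hu.aemeasurable hu01,
      fidelity_eq_ofReal_integral hf hf01 hu.aemeasurable hu01,
      ENNReal.ofReal_le_ofReal_iff
        (integral_nonneg_of_ae (hu01.mono fun _ hx => cvCost_nonneg hx)),
      hquad c₁, hquad c] at h
    simpa using h
  have hB : 0 ≤ B := integral_nonneg_of_ae <| by
    filter_upwards [hu01, hf01'] with x hx hfx using mul_nonneg hx.1 hfx.1
  have hBA : B ≤ A := integral_mono_ae (hint (fun w y => w * y) (by fun_prop))
    (hint (fun w _ => w) (by fun_prop)) <| by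
    filter_upwards [hu01, hf01'] with x hx hfx using mul_le_of_le_one_right hx.1 hfx.2
  have hJ : ∫ x, u x * (c₁ - f x) ∂μ = c₁ * A - B := by
    simp_rw [mul_sub]
    rw [integral_sub (hint (fun w _ => w * c₁) (by fun_prop))
      (hint (fun w y => w * y) (by fun_prop)), integral_mul_const, mul_comm]
  rw [hJ, mul_eq_of_isMinOn_Icc hB hBA hisMin, sub_self]

theorem not_eventually_cost_gap (hmin : IsCVMinimizer lam f u c₁ c₂) (hlam : 0 < lam)
    (hf01 : ∀ x ∈ Ioo (0:ℝ) 1, f x ∈ Icc (0:ℝ) 1) (hc₁ : c₁ ∈ Icc (0:ℝ) 1)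
    (hc₂ : c₂ ∈ Icc (0:ℝ) 1) (hu : MemLp u 2 μ) (hbin : ∀ᵐ x ∂μ, u x = 0 ∨ u x = 1)
    (hx₀ : x₀ ∈ Ioo (0:ℝ) 1) (hul : Tendsto u (𝓝[<] x₀) (𝓝 ul))
    (hur : Tendsto u (𝓝[>] x₀) (𝓝 ur)) (hjump : ul ≠ ur) {v γ : ℝ} (hv : v = 0 ∨ v = 1)
    (hγ : 0 < γ) :
    ¬ ∀ᶠ x in 𝓝[≠] x₀, cvCost c₁ c₂ v (f x) + γ ≤ cvCost c₁ c₂ (1 - v) (f x) := by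
  intro hgap
  rw [← nhdsLT_sup_nhdsGT, eventually_sup] at hgap
  have := nhdsLT_inf_ae_neBot hx₀
  have := nhdsGT_inf_ae_neBot hx₀
  have hUL := binary_of_tendsto hbin hul
  have hUR := binary_of_tendsto hbin hur
  have hl₀ : ∀ᶠ l in 𝓝[<] x₀, l ∈ Ioo 0 x₀ := Ioo_mem_nhdsLT hx₀.1
  have hr₀ : ∀ᶠ r in 𝓝[>] x₀, r ∈ Ioo x₀ 1 := Ioo_mem_nhdsGT hx₀.2
  obtain ⟨l, hl, hlu, hlgap⟩ := (hl₀.and ((eventually_ae_eq_nhdsLT hbin hUL hul).and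
    (eventually_forall_Ioo_nhdsLT hgap.1))).exists
  obtain ⟨r, hr, hru, hrgap⟩ := (hr₀.and ((eventually_ae_eq_nhdsGT hbin hUR hur).and
    (eventually_forall_Ioo_nhdsGT hgap.2))).exists
  have hgap' : ∀ᵐ x ∂μ, x ∈ Ioo l r →
      cvCost c₁ c₂ v (f x) + γ ≤ cvCost c₁ c₂ (1 - v) (f x) := by
    filter_upwards [Measure.ae_ne μ x₀] with x hx hxlr
    rcases lt_or_gt_of_ne hx with h | h
    · exact hlgap x ⟨hxlr.1, h⟩
    · exact hrgap x ⟨h, hxlr.2⟩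
  obtain ⟨p, q, hlp, hpq, hqr, hside⟩ : ∃ p q, l ≤ p ∧ p < q ∧ q ≤ r ∧
      ∀ᵐ x ∂μ, x ∈ Ioo p q → u x = 1 - v := by
    rcases eq_or_eq_of_binary hUL hUR (one_sub_binary hv) hjump with h | h
    · exact ⟨l, x₀, le_rfl, hl.2, hr.1.le, by rwa [h]⟩
    · exact ⟨x₀, r, hl.2.le, hr.1, le_rfl, by rwa [h]⟩
  have hu01 : ∀ᵐ x ∂μ, u x ∈ Icc (0:ℝ) 1 := hbin.mono fun _ => mem_Icc_of_binary
  have hu'01 := ae_piecewise_mem_Icc (l := l) (r := r) (mem_Icc_of_binary hv) hu01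
  have hle := hmin.fidelity_le hlam hf01 hc₁ hc₂ hu01
    ((memLp_const v).piecewise measurableSet_Ioo (hu.restrict _)) hu'01 hc₁ hc₂
    (eVariationOn_piecewise_le hl.1 hl.2 hr.1 hr.2 hul hur (eq_or_eq_of_binary hUL hUR hv hjump))
  have hzero : ENNReal.ofReal γ * μ (Ioo p q) ≤ 0 :=
    ENNReal.le_of_add_le_add_left (fidelity_ne_top hf01 hc₁ hc₂ hu'01)
      (by rw [add_zero]
          exact (fidelity_piecewise_add_le hγ.le hv hbin (Ioo_subset_Ioo hlp hqr) hgap' hside).trans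
            hle)
  exact mul_ne_zero (ENNReal.ofReal_pos.2 hγ).ne'
    (restrict_Ioo_ne_zero hpq (hpq.trans (hqr.trans_lt hr.2)) (hl.1.trans_le hlp |>.trans hpq))
    (le_antisymm hzero zero_le)

theorem midpoint_mem_uIcc (hmin : IsCVMinimizer lam f u c₁ c₂) (hlam : 0 < lam)
    (hf01 : ∀ x ∈ Ioo (0:ℝ) 1, f x ∈ Icc (0:ℝ) 1) (hc₁ : c₁ ∈ Icc (0:ℝ) 1)
    (hc₂ : c₂ ∈ Icc (0:ℝ) 1) (hu : MemLp u 2 μ) (hbin : ∀ᵐ x ∂μ, u x = 0 ∨ u x = 1)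
    (hx₀ : x₀ ∈ Ioo (0:ℝ) 1) (hul : Tendsto u (𝓝[<] x₀) (𝓝 ul))
    (hur : Tendsto u (𝓝[>] x₀) (𝓝 ur)) (hjump : ul ≠ ur) (hne : c₁ ≠ c₂) {fl fr : ℝ}
    (hfl : Tendsto f (𝓝[<] x₀) (𝓝 fl)) (hfr : Tendsto f (𝓝[>] x₀) (𝓝 fr)) :
    (c₁ + c₂) / 2 ∈ uIcc fl fr := by
  set D : ℝ → ℝ → ℝ := fun v y => cvCost c₁ c₂ (1 - v) y - cvCost c₁ c₂ v y
  have hD : ∀ v, v = 0 ∨ v = 1 → ¬ (0 < D v fl ∧ 0 < D v fr) := by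
    rintro v hv ⟨hpos_l, hpos_r⟩
    have hγ := lt_min hpos_l hpos_r
    refine hmin.not_eventually_cost_gap hlam hf01 hc₁ hc₂ hu hbin hx₀ hul hur hjump hv
      (half_pos hγ) ?_
    have hcont : Continuous (D v) := by simp only [D, cvCost]; fun_prop
    rw [← nhdsLT_sup_nhdsGT, eventually_sup]
    constructor
    · filter_upwards [((hcont.tendsto fl).comp hfl).eventually
        (lt_mem_nhds ((half_lt_self hγ).trans_le (min_le_left _ _)))] with x hx
      simp only [Function.comp, D] at hx; linarith
    · filter_upwards [((hcont.tendsto fr).comp hfr).eventually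
        (lt_mem_nhds ((half_lt_self hγ).trans_le (min_le_right _ _)))] with x hx
      simp only [Function.comp, D] at hx; linarith
  have hD₀ : ∀ y, D 0 y = 2 * (c₁ - c₂) * ((c₁ + c₂) / 2 - y) := by
    intro y; simp only [D, cvCost]; ring
  have hD₁ : ∀ y, D 1 y = -D 0 y := by intro y; simp only [D, cvCost]; ring
  have hprod : 0 ≤ (fl - (c₁ + c₂) / 2) * ((c₁ + c₂) / 2 - fr) := by
    by_contra! h
    have hpos : 0 < D 0 fl * D 0 fr := by
      rw [hD₀, hD₀]
      nlinarith [mul_pos (mul_self_pos.2 (sub_ne_zero.2 hne)) (neg_pos.2 h)]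
    rcases pos_and_pos_or_neg_and_neg_of_mul_pos hpos with h0 | h0
    · exact hD 0 (Or.inl rfl) h0
    · exact hD 1 (Or.inr rfl) (by rw [hD₁, hD₁]; exact ⟨neg_pos.2 h0.1, neg_pos.2 h0.2⟩)
  rcases mul_nonneg_iff.1 hprod with h | h
  · exact mem_uIcc.2 (Or.inr ⟨by linarith [h.2], by linarith [h.1]⟩)
  · exact mem_uIcc.2 (Or.inl ⟨by linarith [h.1], by linarith [h.2]⟩)

theorem piecewise_of_eqOn_midpoint (hmin : IsCVMinimizer lam f u c₁ c₂)
    (hu01 : ∀ᵐ x ∂μ, u x ∈ Icc (0:ℝ) 1) {l r : ℝ} (hl : 0 < l) (hlx : l < x₀) (hxr : x₀ < r)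
    (hr : r < 1) (hul : Tendsto u (𝓝[<] x₀) (𝓝 ul)) (hur : Tendsto u (𝓝[>] x₀) (𝓝 ur))
    (hul01 : ul ∈ Icc (0:ℝ) 1) (hfm : ∀ x ∈ Ioo l r, f x = (c₁ + c₂) / 2) :
    IsCVMinimizer lam f ((Ioo l r).piecewise (fun _ => ul) u) c₁ c₂ := by
  refine hmin.of_Fcv_le ?_
  rw [Fcv_eq_of_ae_mem_Icc hu01, Fcv_eq_of_ae_mem_Icc (ae_piecewise_mem_Icc hul01 hu01)]
  gcongr
  · exact eVariationOn_piecewise_le hl hlx hxr hr hul hur (Or.inl rfl)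
  -- where `f` is at the midpoint both values of `u` cost the same
  refine (lintegral_congr fun x => ?_).le
  by_cases hx : x ∈ Ioo l r
  · rw [hfm x hx, cvCost_midpoint, cvCost_midpoint]
  · rw [piecewise_eq_of_notMem _ _ _ hx]

theorem not_eventually_eq_midpoint (hmin : IsCVMinimizer lam f u c₁ c₂) (hlam : 0 < lam)
    (hf : AEMeasurable f μ) (hf01 : ∀ x ∈ Ioo (0:ℝ) 1, f x ∈ Icc (0:ℝ) 1)
    (hc₁ : c₁ ∈ Icc (0:ℝ) 1) (hc₂ : c₂ ∈ Icc (0:ℝ) 1) (hu : MemLp u 2 μ)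
    (hbin : ∀ᵐ x ∂μ, u x = 0 ∨ u x = 1) (hx₀ : x₀ ∈ Ioo (0:ℝ) 1)
    (hul : Tendsto u (𝓝[<] x₀) (𝓝 ul)) (hur : Tendsto u (𝓝[>] x₀) (𝓝 ur)) (hjump : ul ≠ ur)
    (hne : c₁ ≠ c₂) : ¬ ∀ᶠ x in 𝓝 x₀, f x = (c₁ + c₂) / 2 := by
  intro hfm
  obtain ⟨a, b, hab, hfab⟩ := mem_nhds_iff_exists_Ioo_subset.1 hfm
  have := nhdsLT_inf_ae_neBot hx₀
  have := nhdsGT_inf_ae_neBot hx₀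
  have hUL := binary_of_tendsto hbin hul
  have hl₀ : ∀ᶠ l in 𝓝[<] x₀, l ∈ Ioo (max a 0) x₀ := Ioo_mem_nhdsLT (max_lt hab.1 hx₀.1)
  have hr₀ : ∀ᶠ r in 𝓝[>] x₀, r ∈ Ioo x₀ (min b 1) := Ioo_mem_nhdsGT (lt_min hab.2 hx₀.2)
  obtain ⟨l, hl, hlu⟩ := (hl₀.and (eventually_ae_eq_nhdsLT hbin hUL hul)).exists
  obtain ⟨r, hr, hru⟩ :=
    (hr₀.and (eventually_ae_eq_nhdsGT hbin (binary_of_tendsto hbin hur) hur)).exists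
  have hfm' : ∀ x ∈ Ioo l r, f x = (c₁ + c₂) / 2 := fun x hx =>
    hfab ⟨(le_max_left _ _).trans_lt (hl.1.trans hx.1),
      hx.2.trans (hr.2.trans_le (min_le_left _ _))⟩
  have hu01 : ∀ᵐ x ∂μ, u x ∈ Icc (0:ℝ) 1 := hbin.mono fun _ => mem_Icc_of_binary
  have hul01 : ul ∈ Icc (0:ℝ) 1 := mem_Icc_of_binary hUL
  set u' := (Ioo l r).piecewise (fun _ => ul) u
  have hu'01 := ae_piecewise_mem_Icc (l := l) (r := r) hul01 hu01
  have hu' : MemLp u' 2 μ := (memLp_const ul).piecewise measurableSet_Ioo (hu.restrict _)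
  have hr1 : r < 1 := hr.2.trans_le (min_le_right _ _)
  have hmin' : IsCVMinimizer lam f u' c₁ c₂ := hmin.piecewise_of_eqOn_midpoint hu01
    ((le_max_right _ _).trans_lt hl.1) hl.2 hr.1 hr1 hul hur hul01 hfm'
  have hint : ∀ w : ℝ → ℝ, MemLp w 2 μ → (∀ᵐ x ∂μ, w x ∈ Icc (0:ℝ) 1) →
      Integrable (fun x => w x * (c₁ - f x)) μ := fun w hw hw01 =>
    integrable_comp_of_continuous (g := fun w y => w * (c₁ - y)) (by fun_prop)
      hw.aemeasurable hf hw01 (ae_restrict_of_forall_mem measurableSet_Ioo hf01)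
  have h : ∫ x, (u' x - u x) * (c₁ - f x) ∂μ = 0 := by
    simp_rw [sub_mul]
    rw [integral_sub (hint u' hu' hu'01) (hint u hu hu01),
      hmin'.integral_mul_sub_eq_zero hlam hf hf01 hc₁ hc₂ hu' hu'01,
      hmin.integral_mul_sub_eq_zero hlam hf hf01 hc₁ hc₂ hu hu01, sub_self]
  rw [integral_piecewise_sub_mul hl.2 hx₀.1 hr.1 hr1.le hfm' hlu hru] at h
  have hc : c₁ - (c₁ + c₂) / 2 ≠ 0 := fun h' => hne (by linarith)
  exact mul_ne_zero (sub_ne_zero.2 hr.1.ne') (mul_ne_zero (sub_ne_zero.2 hjump) hc) h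

end IsCVMinimizer

section LocallyConstant

variable {f : ℝ → ℝ}

theorem Filter.HasBasis.eventually_eq_of_tendsto {F : Filter ℝ} [F.NeBot] {ι : Type*}
    {p : ι → Prop} {s : ι → Set ℝ} (hF : F.HasBasis p s)
    (hs : ∀ i, p i → IsOpen (s i) ∧ IsPreconnected (s i))
    (hloc : ∀ᶠ x in F, ∀ᶠ y in 𝓝 x, f y = f x) {c : ℝ} (hf : Tendsto f F (𝓝 c)) :
    ∀ᶠ x in F, f x = c := by
  obtain ⟨i, hi, hsub⟩ := hF.eventually_iff.1 hloc
  have hderiv : ∀ x ∈ s i, HasDerivAt f 0 x := fun x hx =>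
    (hasDerivAt_const x (f x)).congr_of_eventuallyEq (hsub hx)
  obtain ⟨k, hk⟩ := (hs i hi).1.exists_is_const_of_deriv_eq_zero (hs i hi).2
    (fun x hx => (hderiv x hx).differentiableAt.differentiableWithinAt)
    (fun x hx => (hderiv x hx).deriv)
  have hev : ∀ᶠ x in F, f x = k := hF.eventually_iff.2 ⟨i, hi, hk⟩
  rwa [tendsto_nhds_unique hf (tendsto_const_nhds.congr' (hev.mono fun _ h => h.symm))]

theorem eventually_eq_of_continuousAt_of_eventually_eq_off_finset {S : Finset ℝ} {x₀ : ℝ}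
    (hS : ∀ x ∈ Ioo (0:ℝ) 1, x ∉ S → ∀ᶠ y in 𝓝 x, f y = f x) (hx₀ : x₀ ∈ Ioo (0:ℝ) 1)
    (hf : ContinuousAt f x₀) : ∀ᶠ x in 𝓝 x₀, f x = f x₀ := by
  have hloc : ∀ᶠ x in 𝓝[≠] x₀, ∀ᶠ y in 𝓝 x, f y = f x := by
    filter_upwards [nhdsWithin_le_nhds (isOpen_Ioo.mem_nhds hx₀),
      nhdsNE_le_cofinite x₀ S.finite_toSet.compl_mem_cofinite] with x hx hxS using hS x hx hxS
  rw [← nhdsLT_sup_nhdsGT, eventually_sup] at hloc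
  rw [← nhdsNE_sup_pure, ← nhdsLT_sup_nhdsGT, eventually_sup, eventually_sup, eventually_pure]
  have hIoo : ∀ a b : ℝ, IsOpen (Ioo a b) ∧ IsPreconnected (Ioo a b) := fun _ _ =>
    ⟨isOpen_Ioo, isPreconnected_Ioo⟩
  exact ⟨⟨(nhdsLT_basis x₀).eventually_eq_of_tendsto (fun _ _ => hIoo _ _) hloc.1
      (hf.tendsto.mono_left nhdsWithin_le_nhds),
    (nhdsGT_basis x₀).eventually_eq_of_tendsto (fun _ _ => hIoo _ _) hloc.2
      (hf.tendsto.mono_left nhdsWithin_le_nhds)⟩, rfl⟩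

end LocallyConstant

theorem stmt19_general (lam : ℝ) (hlam : 0 < lam) (f : ℝ → ℝ)
    (hfBV : BoundedVariationOn f (Ioo 0 1))
    (hf01 : ∀ x ∈ Ioo (0:ℝ) 1, f x ∈ Icc (0:ℝ) 1)
    (u : ℝ → ℝ) (c₁ c₂ : ℝ) (hc₁ : c₁ ∈ Icc (0:ℝ) 1) (hc₂ : c₂ ∈ Icc (0:ℝ) 1)
    (hu : MemLp u 2 (volume.restrict (Ioo (0:ℝ) 1)))
    (hbin : ∀ᵐ x ∂(volume.restrict (Ioo (0:ℝ) 1)), u x = 0 ∨ u x = 1)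
    (hmin : ∀ (u' : ℝ → ℝ) (d₁ d₂ : ℝ), MemLp u' 2 (volume.restrict (Ioo (0:ℝ) 1)) →
      d₁ ∈ Icc (0:ℝ) 1 → d₂ ∈ Icc (0:ℝ) 1 → Fcv lam f u c₁ c₂ ≤ Fcv lam f u' d₁ d₂)
    (x₀ ul ur fl fr : ℝ) (hx₀ : x₀ ∈ Ioo (0:ℝ) 1)
    (hul : Tendsto u (𝓝[<] x₀) (𝓝 ul)) (hur : Tendsto u (𝓝[>] x₀) (𝓝 ur))
    (hjump : ul ≠ ur)
    (hfl : Tendsto f (𝓝[<] x₀) (𝓝 fl)) (hfr : Tendsto f (𝓝[>] x₀) (𝓝 fr)) :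
    (min fl fr ≤ (c₁ + c₂) / 2 ∧ (c₁ + c₂) / 2 ≤ max fl fr) ∧
      ((∃ S : Finset ℝ, ∀ x ∈ Ioo (0:ℝ) 1, x ∉ S → ∀ᶠ y in 𝓝 x, f y = f x) →
        ¬ ContinuousAt f x₀) := by
  have hmin : IsCVMinimizer lam f u c₁ c₂ := hmin
  have hu01 : ∀ᵐ x ∂μ, u x ∈ Icc (0:ℝ) 1 := hbin.mono fun _ => mem_Icc_of_binary
  have hne := hmin.ne_of_jump hf01 hc₁ hu01 hx₀ hul hur hjump
  have hmid := hmin.midpoint_mem_uIcc hlam hf01 hc₁ hc₂ hu hbin hx₀ hul hur hjump hne hfl hfr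
  refine ⟨hmid, fun ⟨S, hS⟩ hcont => ?_⟩
  have hfl' := tendsto_nhds_unique hfl (hcont.tendsto.mono_left nhdsWithin_le_nhds)
  have hfr' := tendsto_nhds_unique hfr (hcont.tendsto.mono_left nhdsWithin_le_nhds)
  rw [hfl', hfr', uIcc_self, mem_singleton_iff] at hmid
  have hconst := eventually_eq_of_continuousAt_of_eventually_eq_off_finset hS hx₀ hcont
  exact hmin.not_eventually_eq_midpoint hlam
    (hfBV.locallyBoundedVariationOn.aemeasurable_restrict measurableSet_Ioo) hf01 hc₁ hc₂ hu hbin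
    hx₀ hul hur hjump hne (hmid ▸ hconst)

/-- let `f ∈ BV(0,1)`, `0 ≤ f ≤ 1`, satisfy hypothesis (H), and let
`(u, c₁, c₂)` be a minimizer of the 1D Chan--Vese functional `F` with `u` binary and
nonconstant. Then every jump point `x₀ ∈ J_u` (with one-sided limits `ul ≠ ur` of `u` and
`fl, fr` of `f`) satisfies `(c₁+c₂)/2 ∈ [min(f⁻(x₀),f⁺(x₀)), max(f⁻(x₀),f⁺(x₀))]`;
in particular, if `f` is piecewise constant then `x₀ ∈ J_f`, i.e. `J_u ⊆ J_f`. -/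
theorem stmt19 (lam : ℝ) (hlam : 0 < lam) (f : ℝ → ℝ)
    (hfBV : BoundedVariationOn f (Ioo 0 1))
    (hf01 : ∀ x ∈ Ioo (0:ℝ) 1, f x ∈ Icc (0:ℝ) 1)
    (hH : ∀ c ∈ Ioo (0:ℝ) 1,
      volume (frontier {x | x ∈ Ioo (0:ℝ) 1 ∧ ContinuousAt f x ∧ f x = c}) = 0)
    (u : ℝ → ℝ) (c₁ c₂ : ℝ) (hc₁ : c₁ ∈ Icc (0:ℝ) 1) (hc₂ : c₂ ∈ Icc (0:ℝ) 1)
    (hu : MemLp u 2 (volume.restrict (Ioo (0:ℝ) 1)))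
    (hbin : ∀ᵐ x ∂(volume.restrict (Ioo (0:ℝ) 1)), u x = 0 ∨ u x = 1)
    (hnonconst : ¬ ∃ k : ℝ, ∀ᵐ x ∂(volume.restrict (Ioo (0:ℝ) 1)), u x = k)
    (hmin : ∀ (u' : ℝ → ℝ) (d₁ d₂ : ℝ), MemLp u' 2 (volume.restrict (Ioo (0:ℝ) 1)) →
      d₁ ∈ Icc (0:ℝ) 1 → d₂ ∈ Icc (0:ℝ) 1 → Fcv lam f u c₁ c₂ ≤ Fcv lam f u' d₁ d₂)
    (x₀ ul ur fl fr : ℝ) (hx₀ : x₀ ∈ Ioo (0:ℝ) 1)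
    (hul : Tendsto u (𝓝[<] x₀) (𝓝 ul)) (hur : Tendsto u (𝓝[>] x₀) (𝓝 ur))
    (hjump : ul ≠ ur)
    (hfl : Tendsto f (𝓝[<] x₀) (𝓝 fl)) (hfr : Tendsto f (𝓝[>] x₀) (𝓝 fr)) :
    (min fl fr ≤ (c₁ + c₂) / 2 ∧ (c₁ + c₂) / 2 ≤ max fl fr) ∧
      ((∃ S : Finset ℝ, ∀ x ∈ Ioo (0:ℝ) 1, x ∉ S → ∀ᶠ y in 𝓝 x, f y = f x) →
        ¬ ContinuousAt f x₀) :=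
  stmt19_general lam hlam f hfBV hf01 u c₁ c₂ hc₁ hc₂ hu hbin hmin x₀ ul ur fl fr hx₀ hul hur hjump
    hfl hfr
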